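/- arXiv:2507.20422 — 3 statements merged into one kernel-verified Lean document; each statement's English description precedes it below -/
import Mathlib

section
/- Chain-insertion fidelity invariance (Property 1). Let a, b, k be positive natural numbers. Let V_{p1}, V_{q1} be unitary a×a complex matrices, V_α, V_β unitary 2×2 complex matrices, and V_{p2}, V_{q2} unitary b×b complex matrices. On the unextended register (index type Fin a × Fin 2 × Fin 2 × Fin b) let W_{αβ}, W_P', W_Q' be unitary matrices, and set U_P = W_{αβ}·W_P'·(V_{p1} ⊗ₖ V_α ⊗ₖ V_β ⊗ₖ V_{p2}) and U_Q = W_{αβ}·W_Q'·(V_{q1} ⊗ₖ V_α ⊗ₖ V_β ⊗ₖ V_{q2}). On the extended register (index type Fin a × Fin 2 × Fin k × Fin 2 × Fin b) let C be any unitary matrix, let ι denote the embedding that sends a matrix M on the unextended register to the matrix on the extended register acting as M on the a, 2, 2, b factors and as the identity I_k on the inserted middle factor (i.e. the reindexing of M ⊗ₖ I_k that places the identity factor between the two 2-dimensional factors), and set Ũ_P = C · ι(W_P') · (V_{p1} ⊗ₖ V_α ⊗ₖ I_k ⊗ₖ V_β ⊗ₖ V_{p2}) and Ũ_Q = C ·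 ι(W_Q') · (V_{q1} ⊗ₖ V_α ⊗ₖ I_k ⊗ₖ V_β ⊗ₖ V_{q2}). Then f(Ũ_Q^† · Ũ_P) = f(U_Q^† · U_P), i.e. the quantum fidelity between the extended encoded states equals the quantum fidelity between the unextended encoded states. -/
open Matrix
open scoped Kronecker

/-- Fiducial fidelity entry: the squared modulus of the matrix entry at the
all-zeros row and column index. -/
noncomputable def fid {ι : Type*} [Zero ι] (M : Matrix ι ι ℂ) : ℝ :=
  ‖M 0 0‖ ^ 2

/-- Embedding of a matrix on the unextended register `Fin a × Fin 2 × Fin 2 × Fin b`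
into the extended register `Fin a × Fin 2 × Fin k × Fin 2 × Fin b`, acting as the
matrix on the `a, 2, 2, b` factors and as the identity on the inserted `Fin k`
factor (the reindexing of `M ⊗ₖ I_k` placing the identity factor in the middle). -/
def insertId (a k b : ℕ)
    (M : Matrix (Fin a × Fin 2 × Fin 2 × Fin b) (Fin a × Fin 2 × Fin 2 × Fin b) ℂ) :
    Matrix (Fin a × Fin 2 × Fin k × Fin 2 × Fin b)
      (Fin a × Fin 2 × Fin k × Fin 2 × Fin b) ℂ :=
  fun p q =>
    (if p.2.2.1 = q.2.2.1 then (1 : ℂ) else 0) *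
      M (p.1, p.2.1, p.2.2.2.1, p.2.2.2.2) (q.1, q.2.1, q.2.2.2.1, q.2.2.2.2)

/-
Both fidelities only see `U_Q^† U_P`. The common outer gates `W_{αβ}` and `C` cancel there by
unitarity, and the inserted identity factors assemble into `ι = insertId`, which is the
conjugate of `M ↦ M ⊗ₖ I_k` by a reordering of the tensor factors, hence a `*`-homomorphism.
So `Ũ_Q^† Ũ_P = ι (U_Q^† U_P)`, and `ι` does not change the entry at the all-zeros index.
-/

theorem star_mul_mul_mul_of_mem_unitary {R : Type*} [Monoid R] [StarMul R] {U : R}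
    (hU : U ∈ unitary R) (x y : R) : star (U * x) * (U * y) = star x * y := by
  rw [star_mul, mul_assoc, ← mul_assoc (star U), Unitary.star_mul_self_of_mem hU, one_mul]

section InsertId

variable {a k b : ℕ}

def insertIdEquiv (a k b : ℕ) :
    Fin a × Fin 2 × Fin k × Fin 2 × Fin b ≃ (Fin a × Fin 2 × Fin 2 × Fin b) × Fin k where
  toFun p := ((p.1, p.2.1, p.2.2.2.1, p.2.2.2.2), p.2.2.1)
  invFun q := (q.1.1, q.1.2.1, q.2, q.1.2.2.1, q.1.2.2.2)
  left_inv _ := rfl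
  right_inv _ := rfl

theorem insertId_eq_submatrix_kronecker_one
    (M : Matrix (Fin a × Fin 2 × Fin 2 × Fin b) (Fin a × Fin 2 × Fin 2 × Fin b) ℂ) :
    insertId a k b M = (M ⊗ₖ (1 : Matrix (Fin k) (Fin k) ℂ)).submatrix
      (insertIdEquiv a k b) (insertIdEquiv a k b) := by
  ext p q
  simp [insertId, insertIdEquiv, one_apply, mul_comm]

theorem insertId_mul
    (M N : Matrix (Fin a × Fin 2 × Fin 2 × Fin b) (Fin a × Fin 2 × Fin 2 × Fin b) ℂ) :
    insertId a k b M * insertId a k b N = insertId a k b (M * N) := by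
  simp only [insertId_eq_submatrix_kronecker_one, submatrix_mul_equiv, ← mul_kronecker_mul,
    Matrix.mul_one]

theorem insertId_conjTranspose
    (M : Matrix (Fin a × Fin 2 × Fin 2 × Fin b) (Fin a × Fin 2 × Fin 2 × Fin b) ℂ) :
    (insertId a k b M)ᴴ = insertId a k b Mᴴ := by
  simp only [insertId_eq_submatrix_kronecker_one, conjTranspose_submatrix, conjTranspose_kronecker,
    conjTranspose_one]

theorem insertId_apply_zero_zero [NeZero a] [NeZero k] [NeZero b]
    (M : Matrix (Fin a × Fin 2 × Fin 2 × Fin b) (Fin a × Fin 2 × Fin 2 × Fin b) ℂ) :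
    insertId a k b M 0 0 = M 0 0 := by
  rw [insertId, if_pos rfl, one_mul]
  rfl

theorem kronecker_one_kronecker_eq_insertId (A : Matrix (Fin a) (Fin a) ℂ)
    (B C : Matrix (Fin 2) (Fin 2) ℂ) (D : Matrix (Fin b) (Fin b) ℂ) :
    A ⊗ₖ (B ⊗ₖ ((1 : Matrix (Fin k) (Fin k) ℂ) ⊗ₖ (C ⊗ₖ D))) =
      insertId a k b (A ⊗ₖ (B ⊗ₖ (C ⊗ₖ D))) := by
  ext p q
  simp only [insertId, kroneckerMap_apply, one_apply]
  ring

end InsertId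

theorem chain_insertion_fidelity_invariance_general
    (a b k : ℕ) [NeZero a] [NeZero b] [NeZero k]
    (Vp1 Vq1 : Matrix (Fin a) (Fin a) ℂ)
    (Vα Vβ : Matrix (Fin 2) (Fin 2) ℂ)
    (Vp2 Vq2 : Matrix (Fin b) (Fin b) ℂ)
    (Wαβ WP' WQ' :
      Matrix (Fin a × Fin 2 × Fin 2 × Fin b) (Fin a × Fin 2 × Fin 2 × Fin b) ℂ)
    (hWαβ : Wαβ ∈ unitaryGroup (Fin a × Fin 2 × Fin 2 × Fin b) ℂ)
    (C : Matrix (Fin a × Fin 2 × Fin k × Fin 2 × Fin b)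
      (Fin a × Fin 2 × Fin k × Fin 2 × Fin b) ℂ)
    (hC : C ∈ unitaryGroup (Fin a × Fin 2 × Fin k × Fin 2 × Fin b) ℂ)
    -- the unextended encoded unitaries
    (UP UQ : Matrix (Fin a × Fin 2 × Fin 2 × Fin b) (Fin a × Fin 2 × Fin 2 × Fin b) ℂ)
    (hUP : UP = Wαβ * WP' * (Vp1 ⊗ₖ (Vα ⊗ₖ (Vβ ⊗ₖ Vp2))))
    (hUQ : UQ = Wαβ * WQ' * (Vq1 ⊗ₖ (Vα ⊗ₖ (Vβ ⊗ₖ Vq2))))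
    -- the extended encoded unitaries
    (UPt UQt : Matrix (Fin a × Fin 2 × Fin k × Fin 2 × Fin b)
      (Fin a × Fin 2 × Fin k × Fin 2 × Fin b) ℂ)
    (hUPt : UPt = C * insertId a k b WP' *
      (Vp1 ⊗ₖ (Vα ⊗ₖ ((1 : Matrix (Fin k) (Fin k) ℂ) ⊗ₖ (Vβ ⊗ₖ Vp2)))))
    (hUQt : UQt = C * insertId a k b WQ' *
      (Vq1 ⊗ₖ (Vα ⊗ₖ ((1 : Matrix (Fin k) (Fin k) ℂ) ⊗ₖ (Vβ ⊗ₖ Vq2))))) :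
    fid (UQtᴴ * UPt) = fid (UQᴴ * UP) := by
  have cancel_C := star_mul_mul_mul_of_mem_unitary hC
  have cancel_W := star_mul_mul_mul_of_mem_unitary hWαβ
  simp only [star_eq_conjTranspose] at cancel_C cancel_W
  have extended_eq_insertId : UQtᴴ * UPt = insertId a k b (UQᴴ * UP) := by
    rw [hUPt, hUQt, hUP, hUQ, kronecker_one_kronecker_eq_insertId,
      kronecker_one_kronecker_eq_insertId, Matrix.mul_assoc C, Matrix.mul_assoc C, cancel_C,
      Matrix.mul_assoc Wαβ, Matrix.mul_assoc Wαβ, cancel_W, insertId_mul, insertId_mul,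
      insertId_conjTranspose, insertId_mul]
  rw [extended_eq_insertId, fid, fid, insertId_apply_zero_zero]

/-- **Chain-insertion fidelity invariance (Property 1).** -/
theorem chain_insertion_fidelity_invariance
    (a b k : ℕ) [NeZero a] [NeZero b] [NeZero k]
    (Vp1 Vq1 : Matrix (Fin a) (Fin a) ℂ)
    (hVp1 : Vp1 ∈ unitaryGroup (Fin a) ℂ) (hVq1 : Vq1 ∈ unitaryGroup (Fin a) ℂ)
    (Vα Vβ : Matrix (Fin 2) (Fin 2) ℂ)
    (hVα : Vα ∈ unitaryGroup (Fin 2) ℂ) (hVβ : Vβ ∈ unitaryGroup (Fin 2) ℂ)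
    (Vp2 Vq2 : Matrix (Fin b) (Fin b) ℂ)
    (hVp2 : Vp2 ∈ unitaryGroup (Fin b) ℂ) (hVq2 : Vq2 ∈ unitaryGroup (Fin b) ℂ)
    (Wαβ WP' WQ' :
      Matrix (Fin a × Fin 2 × Fin 2 × Fin b) (Fin a × Fin 2 × Fin 2 × Fin b) ℂ)
    (hWαβ : Wαβ ∈ unitaryGroup (Fin a × Fin 2 × Fin 2 × Fin b) ℂ)
    (hWP' : WP' ∈ unitaryGroup (Fin a × Fin 2 × Fin 2 × Fin b) ℂ)
    (hWQ' : WQ' ∈ unitaryGroup (Fin a × Fin 2 × Fin 2 × Fin b) ℂ)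
    (C : Matrix (Fin a × Fin 2 × Fin k × Fin 2 × Fin b)
      (Fin a × Fin 2 × Fin k × Fin 2 × Fin b) ℂ)
    (hC : C ∈ unitaryGroup (Fin a × Fin 2 × Fin k × Fin 2 × Fin b) ℂ)
    -- the unextended encoded unitaries
    (UP UQ : Matrix (Fin a × Fin 2 × Fin 2 × Fin b) (Fin a × Fin 2 × Fin 2 × Fin b) ℂ)
    (hUP : UP = Wαβ * WP' * (Vp1 ⊗ₖ (Vα ⊗ₖ (Vβ ⊗ₖ Vp2))))
    (hUQ : UQ = Wαβ * WQ' * (Vq1 ⊗ₖ (Vα ⊗ₖ (Vβ ⊗ₖ Vq2))))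
    -- the extended encoded unitaries
    (UPt UQt : Matrix (Fin a × Fin 2 × Fin k × Fin 2 × Fin b)
      (Fin a × Fin 2 × Fin k × Fin 2 × Fin b) ℂ)
    (hUPt : UPt = C * insertId a k b WP' *
      (Vp1 ⊗ₖ (Vα ⊗ₖ ((1 : Matrix (Fin k) (Fin k) ℂ) ⊗ₖ (Vβ ⊗ₖ Vp2)))))
    (hUQt : UQt = C * insertId a k b WQ' *
      (Vq1 ⊗ₖ (Vα ⊗ₖ ((1 : Matrix (Fin k) (Fin k) ℂ) ⊗ₖ (Vβ ⊗ₖ Vq2))))) :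
    fid (UQtᴴ * UPt) = fid (UQᴴ * UP) :=
  chain_insertion_fidelity_invariance_general a b k Vp1 Vq1 Vα Vβ Vp2 Vq2 Wαβ WP' WQ' hWαβ C hC UP
    UQ hUP hUQ UPt UQt hUPt hUQt
end

section
/- Chain contraction reduces qubit count (Corollary 1). Let N and N_C be natural numbers with N_C < N, and set m = 2^(N−N_C) and K = 2^(N_C). Let C be a unitary (m·K)×(m·K) complex matrix (indexed by Fin m × Fin K), and let M_P, M_Q be unitary m×m complex matrices. Suppose the N-qubit encoded unitaries of two molecular representations P̃ and Q̃ have the form Ũ_P = C · (M_P ⊗ₖ I_K) and Ũ_Q = C · (M_Q ⊗ₖ I_K), i.e. they share a common unitary C on the fragment qubits and their couplings, and otherwise act trivially on the N_C fragment qubits. Then the N-qubit fidelity F(P̃, Q̃) = f(Ũ_Q^† · Ũ_P) equals the fidelity f(M_Q^† · M_P) computed with only N − N_C qubits. -/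
open Matrix
open scoped Kronecker

/-! The common unitary `C` cancels in `Ũ_Qᴴ Ũ_P` because `Cᴴ C = 1`, leaving
`(M_Qᴴ M_P) ⊗ₖ I_K`, and the all-zeros entry of a Kronecker product with the identity
is the all-zeros entry of the first factor. -/

namespace Matrix

theorem conjTranspose_mul_mul_of_conjTranspose_mul_self_eq_one {l m n R : Type*}
    [Fintype l] [Fintype m] [DecidableEq m] [CommSemiring R] [StarRing R]
    {C : Matrix l m R} (hC : Cᴴ * C = 1) (A B : Matrix m n R) :
    (C * A)ᴴ * (C * B) = Aᴴ * B := by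
  rw [conjTranspose_mul, Matrix.mul_assoc, ← Matrix.mul_assoc Cᴴ, hC, Matrix.one_mul]

theorem conjTranspose_kronecker_one_mul_kronecker_one {l m n R : Type*}
    [Fintype l] [Fintype n] [DecidableEq n] [CommSemiring R] [StarRing R]
    (A B : Matrix l m R) :
    (A ⊗ₖ (1 : Matrix n n R))ᴴ * (B ⊗ₖ (1 : Matrix n n R)) = (Aᴴ * B) ⊗ₖ (1 : Matrix n n R) := by
  rw [conjTranspose_kronecker, conjTranspose_one, ← mul_kronecker_mul, Matrix.one_mul]

end Matrix

theorem fid_kronecker_one {ι κ : Type*} [Zero ι] [Zero κ] [DecidableEq κ]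
    (A : Matrix ι ι ℂ) : fid (A ⊗ₖ (1 : Matrix κ κ ℂ)) = fid A := by
  simp [fid]

theorem chain_contraction_reduces_qubits_general
    (N NC : ℕ)
    (C : Matrix (Fin (2 ^ (N - NC)) × Fin (2 ^ NC))
      (Fin (2 ^ (N - NC)) × Fin (2 ^ NC)) ℂ)
    (hC : C ∈ unitaryGroup (Fin (2 ^ (N - NC)) × Fin (2 ^ NC)) ℂ)
    (MP MQ : Matrix (Fin (2 ^ (N - NC))) (Fin (2 ^ (N - NC))) ℂ)
    (UPt UQt : Matrix (Fin (2 ^ (N - NC)) × Fin (2 ^ NC))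
      (Fin (2 ^ (N - NC)) × Fin (2 ^ NC)) ℂ)
    (hUPt : UPt = C * (MP ⊗ₖ (1 : Matrix (Fin (2 ^ NC)) (Fin (2 ^ NC)) ℂ)))
    (hUQt : UQt = C * (MQ ⊗ₖ (1 : Matrix (Fin (2 ^ NC)) (Fin (2 ^ NC)) ℂ))) :
    fid (UQtᴴ * UPt) = fid (MQᴴ * MP) := by
  rw [hUPt, hUQt,
    conjTranspose_mul_mul_of_conjTranspose_mul_self_eq_one (mem_unitaryGroup_iff'.mp hC),
    conjTranspose_kronecker_one_mul_kronecker_one, fid_kronecker_one]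

/-- **Chain contraction reduces qubit count (Corollary 1).** The `N`-qubit fidelity
of two encoded molecules sharing common fragments on `N_C` qubits equals a fidelity
computed with only `N − N_C` qubits. -/
theorem chain_contraction_reduces_qubits
    (N NC : ℕ) (hNC : NC < N)
    (C : Matrix (Fin (2 ^ (N - NC)) × Fin (2 ^ NC))
      (Fin (2 ^ (N - NC)) × Fin (2 ^ NC)) ℂ)
    (hC : C ∈ unitaryGroup (Fin (2 ^ (N - NC)) × Fin (2 ^ NC)) ℂ)
    (MP MQ : Matrix (Fin (2 ^ (N - NC))) (Fin (2 ^ (N - NC))) ℂ)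
    (hMP : MP ∈ unitaryGroup (Fin (2 ^ (N - NC))) ℂ)
    (hMQ : MQ ∈ unitaryGroup (Fin (2 ^ (N - NC))) ℂ)
    (UPt UQt : Matrix (Fin (2 ^ (N - NC)) × Fin (2 ^ NC))
      (Fin (2 ^ (N - NC)) × Fin (2 ^ NC)) ℂ)
    (hUPt : UPt = C * (MP ⊗ₖ (1 : Matrix (Fin (2 ^ NC)) (Fin (2 ^ NC)) ℂ)))
    (hUQt : UQt = C * (MQ ⊗ₖ (1 : Matrix (Fin (2 ^ NC)) (Fin (2 ^ NC)) ℂ))) :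
    fid (UQtᴴ * UPt) = fid (MQᴴ * MP) :=
  chain_contraction_reduces_qubits_general N NC C hC MP MQ UPt UQt hUPt hUQt
end

section
/- Two-qubit rotation gates built from the same Pauli commute. Fix a 2×2 complex matrix P and a natural number n. For distinct indices i, j ∈ Fin n, define P_{ij} as the iterated Kronecker product over m ∈ Fin n of A_m, where A_m = P if m = i or m = j, and A_m = I₂ otherwise, and for a real angle θ define the rotation gate R_{ij}(θ) = exp(−(i·θ/2) · P_{ij}), the matrix exponential of the scaled coupling operator. Then for any two pairs of distinct indices (i, j) and (k, l) in Fin n and any real angles θ, φ, the gates commute: R_{ij}(θ) · R_{kl}(φ) = R_{kl}(φ) · R_{ij}(θ). -/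
open Matrix

/-- The `n`-qubit coupling operator `P_{ij}`: the iterated Kronecker product over
`m : Fin n` of the matrix `A m`, where `A m = P` if `m = i` or `m = j`, and
`A m = I₂` otherwise. -/
def coupling (n : ℕ) (P : Matrix (Fin 2) (Fin 2) ℂ) (i j : Fin n) :
    Matrix (Fin n → Fin 2) (Fin n → Fin 2) ℂ :=
  fun x y =>
    ∏ m, (if m = i ∨ m = j then P else (1 : Matrix (Fin 2) (Fin 2) ℂ)) (x m) (y m)

/-- The two-qubit rotation gate `R_{ij}(θ) = exp(−(i·θ/2) · P_{ij})`, the matrix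
exponential of the scaled coupling operator. -/
noncomputable def rotGate (n : ℕ) (P : Matrix (Fin 2) (Fin 2) ℂ) (i j : Fin n)
    (θ : ℝ) : Matrix (Fin n → Fin 2) (Fin n → Fin 2) ℂ :=
  NormedSpace.exp ((-(Complex.I * θ / 2)) • coupling n P i j)

/-! The coupling operators `P_{ij}` are Kronecker products of factors `P` and `I₂`, which
commute with each other; Kronecker products multiply factorwise, so any two `P_{ij}`, `P_{kl}`
commute, and hence so do their exponentials. -/

namespace Matrix

variable {ι α β γ R : Type*} [Fintype ι] [CommSemiring R]

def piKron (M : ι → Matrix α β R) : Matrix (ι → α) (ι → β) R :=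
  of fun x y => ∏ m, M m (x m) (y m)

theorem piKron_mul [DecidableEq ι] [Fintype β] (M : ι → Matrix α β R) (N : ι → Matrix β γ R) :
    piKron M * piKron N = piKron fun m => M m * N m := by
  ext x y
  simp only [piKron, mul_apply, of_apply, Finset.prod_univ_sum,
    Fintype.piFinset_univ, Finset.prod_mul_distrib]

theorem commute_piKron [DecidableEq ι] [Fintype α] {M N : ι → Matrix α α R}
    (h : ∀ m, Commute (M m) (N m)) : Commute (piKron M) (piKron N) := by
  simp only [Commute, SemiconjBy, piKron_mul, (h _).eq]

end Matrix

theorem coupling_eq_piKron (n : ℕ) (P : Matrix (Fin 2) (Fin 2) ℂ) (i j : Fin n) :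
    coupling n P i j = piKron fun m => if m = i ∨ m = j then P else 1 :=
  rfl

theorem coupling_commute (n : ℕ) (P : Matrix (Fin 2) (Fin 2) ℂ) (i j k l : Fin n) :
    Commute (coupling n P i j) (coupling n P k l) := by
  rw [coupling_eq_piKron, coupling_eq_piKron]
  refine commute_piKron fun m => ?_
  split_ifs
  exacts [Commute.refl P, Commute.one_right P, Commute.one_left P, Commute.one_left 1]

theorem rotGate_mul_comm_general
    (P : Matrix (Fin 2) (Fin 2) ℂ) (n : ℕ) (i j k l : Fin n)
    (θ φ : ℝ) :
    rotGate n P i j θ * rotGate n P k l φ = rotGate n P k l φ * rotGate n P i j θ :=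
  (((coupling_commute n P i j k l).smul_left _).smul_right _).exp.eq

/-- **Two-qubit rotation gates built from the same Pauli commute.** -/
theorem rotGate_mul_comm
    (P : Matrix (Fin 2) (Fin 2) ℂ) (n : ℕ) (i j k l : Fin n)
    (hij : i ≠ j) (hkl : k ≠ l) (θ φ : ℝ) :
    rotGate n P i j θ * rotGate n P k l φ = rotGate n P k l φ * rotGate n P i j θ :=
  rotGate_mul_comm_general P n i j k l θ φ
end
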